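/- arXiv:1903.02805 — 8 statements merged into one kernel-verified Lean document; each statement's English description precedes it below -/
import Mathlib

section
/- The point T = (4, 10) on the elliptic curve E' : y² = x³ + 9x over ℚ has infinite order in the group E'(ℚ); that is, for every positive integer n, the n-fold sum n•T is not the point at infinity. -/
/-- The elliptic curve `E' : y² = x³ + 9x` over `ℚ`. -/
def Ecurve : WeierstrassCurve.Affine ℚ :=
  { a₁ := 0, a₂ := 0, a₃ := 0, a₄ := 9, a₆ := 0 }

theorem Tpt_nonsingular : Ecurve.Nonsingular 4 10 := by
  simp only [WeierstrassCurve.Affine.nonsingular_iff, WeierstrassCurve.Affine.equation_iff, Ecurve]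
  norm_num

/-- The point `T = (4, 10)` on `E'`. -/
noncomputable def Tpt : Ecurve.Point := WeierstrassCurve.Affine.Point.some _ _ Tpt_nonsingular

open WeierstrassCurve.Affine

lemma val2_nat_odd {n : ℕ} (h : ¬ 2 ∣ n) : padicValRat 2 ((n:ℚ)) = 0 := by
  rw [padicValRat.of_nat]
  exact_mod_cast padicValNat.eq_zero_of_not_dvd h

lemma val2_two_pow (k : ℕ) : padicValRat 2 ((2:ℚ)^k) = k := by
  rw [show (2:ℚ) = ((2:ℕ):ℚ) by norm_num, padicValRat.pow,
    padicValRat.self (by norm_num)]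
  ring

-- doubling valuation lemma
lemma double_val {x y : ℚ} (h : Ecurve.Nonsingular x y) (m : ℤ) (hm : 1 ≤ m)
    (hv : padicValRat 2 x = -(2*m)) :
    ∃ (x' y' : ℚ) (h' : Ecurve.Nonsingular x' y'),
      Point.some _ _ h + Point.some _ _ h = Point.some _ _ h' ∧ padicValRat 2 x' = -(2*(m+1)) := by
  have heq : y ^ 2 = x ^ 3 + 9 * x := by
    have := h.1
    rw [WeierstrassCurve.Affine.equation_iff] at this
    simpa [Ecurve] using this
  have hx0 : x ≠ 0 := by
    rintro rfl
    rw [padicValRat.zero] at hv; omega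
  have hy0 : y ≠ 0 := by
    rintro rfl
    have : x * (x ^ 2 + 9) = 0 := by linarith [heq]
    rcases mul_eq_zero.1 this with h' | h'
    · exact hx0 h'
    · nlinarith [sq_nonneg x]
  have hy : y ≠ Ecurve.negY x y := by
    simp only [WeierstrassCurve.Affine.negY, Ecurve]
    intro hc
    apply hy0
    linarith
  refine ⟨_, _, _, WeierstrassCurve.Affine.Point.add_self_of_Y_ne hy, ?_⟩
  have h9 : x^2 + 9 ≠ 0 := by positivity
  have h4 : 4 * x * (x^2+9) ≠ 0 := by simp [hx0, h9]
  have hXeq : Ecurve.addX x x (Ecurve.slope x x y y) = (x^2-9)^2 / (4*x*(x^2+9)) := by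
    have e1 : Ecurve.addX x x (Ecurve.slope x x y y) = (3*x^2+9)^2/(4*y^2) - 2*x := by
      rw [WeierstrassCurve.Affine.slope_of_Y_ne rfl hy]
      simp only [WeierstrassCurve.Affine.addX, WeierstrassCurve.Affine.negY, Ecurve]
      norm_num
      rw [div_pow, show (y+y)^2 = 2^2*y^2 by ring]
      norm_num
      ring
    rw [e1, heq]
    have h3 : x^3 + 9*x ≠ 0 := by
      intro hc; apply hx0
      have : x * (x^2+9) = 0 := by linarith
      exact (mul_eq_zero.1 this).resolve_right h9
    field_simp
    ring
  rw [hXeq]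
  have h9v : padicValRat 2 (9:ℚ) = 0 := by
    rw [show (9:ℚ) = ((9:ℕ):ℚ) by norm_num]; exact val2_nat_odd (by norm_num)
  have h3v : padicValRat 2 (3:ℚ) = 0 := by
    rw [show (3:ℚ) = ((3:ℕ):ℚ) by norm_num]; exact val2_nat_odd (by norm_num)
  have hx2 : padicValRat 2 (x^2) = -(4*m) := by
    rw [padicValRat.pow x, hv]; ring
  have hxm9 : x^2 - 9 ≠ 0 := by
    intro hc
    have : x = 3 ∨ x = -3 := by
      have : (x-3)*(x+3) = 0 := by linarith
      rcases mul_eq_zero.1 this with h' | h'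
      · left; linarith
      · right; linarith
    rcases this with rfl | rfl
    · rw [h3v] at hv; omega
    · rw [padicValRat.neg, h3v] at hv; omega
  have hva : padicValRat 2 (x^2 - 9) = -(4*m) := by
    rw [sub_eq_add_neg, padicValRat.add_eq_of_lt (by rw [← sub_eq_add_neg]; exact hxm9)
      (pow_ne_zero 2 hx0) (by norm_num) (by rw [hx2, padicValRat.neg, h9v]; omega), hx2]
  have hvb : padicValRat 2 (x^2 + 9) = -(4*m) := by
    rw [padicValRat.add_eq_of_lt (by positivity) (pow_ne_zero 2 hx0) (by norm_num)
      (by rw [hx2, h9v]; omega), hx2]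
  have h4v : padicValRat 2 (4:ℚ) = 2 := by
    rw [show (4:ℚ) = 2^2 by norm_num]; exact_mod_cast val2_two_pow 2
  rw [padicValRat.div (pow_ne_zero 2 hxm9) h4, padicValRat.pow (x^2-9), hva,
    padicValRat.mul (mul_ne_zero (by norm_num) hx0) h9,
    padicValRat.mul (by norm_num) hx0, h4v, hv, hvb]
  push_cast
  ring

lemma pow_smul_val : ∀ k : ℕ, ∃ (x y : ℚ) (h : Ecurve.Nonsingular x y),
    (2^(k+1) : ℕ) • Tpt = Point.some _ _ h ∧ padicValRat 2 x = -(2*((k:ℤ)+2)) := by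
  intro k
  induction k with
  | zero =>
    have hy : (10:ℚ) ≠ Ecurve.negY 4 10 := by
      simp [WeierstrassCurve.Affine.negY, Ecurve]; norm_num
    refine ⟨_, _, WeierstrassCurve.Affine.nonsingular_add Tpt_nonsingular Tpt_nonsingular
      (fun hc => hy hc.2), ?_, ?_⟩
    · show (2:ℕ) • Tpt = _
      rw [two_nsmul, Tpt]
      exact WeierstrassCurve.Affine.Point.add_self_of_Y_ne hy
    · have hXeq : Ecurve.addX 4 4 (Ecurve.slope 4 4 10 10) = 49/400 := by
        rw [WeierstrassCurve.Affine.slope_of_Y_ne rfl hy]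
        simp only [WeierstrassCurve.Affine.addX, WeierstrassCurve.Affine.negY, Ecurve]
        norm_num
      rw [hXeq]
      rw [show (49/400 : ℚ) = 49 / (2^4 * 25) by norm_num,
        padicValRat.div (by norm_num) (by norm_num),
        padicValRat.mul (by norm_num) (by norm_num),
        show (49:ℚ) = ((49:ℕ):ℚ) by norm_num, val2_nat_odd (by norm_num),
        show (25:ℚ) = ((25:ℕ):ℚ) by norm_num, val2_nat_odd (by norm_num),
        val2_two_pow]
      norm_num
  | succ k ih =>
    obtain ⟨x, y, h, hsmul, hval⟩ := ih
    obtain ⟨x', y', h', hadd, hval'⟩ := double_val h ((k:ℤ)+2) (by omega) hval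
    refine ⟨x', y', h', ?_, by push_cast; linarith⟩
    rw [show k+1+1 = (k+1)+1 from rfl, pow_succ, mul_comm, mul_smul, hsmul, two_nsmul, hadd]

/-- The point `T = (4, 10)` has infinite order in `E'(ℚ)`: no positive multiple of it is the
point at infinity. -/
theorem Tpt_infinite_order : ∀ n : ℕ, 0 < n → n • Tpt ≠ 0 := by
  intro n hn hcontra
  have hfin : IsOfFinAddOrder Tpt := isOfFinAddOrder_iff_nsmul_eq_zero.2 ⟨n, hn, hcontra⟩
  set d := addOrderOf Tpt with hd
  have hdpos : 0 < d := hfin.addOrderOf_pos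
  obtain ⟨i, hi, j, hj, hij, hmod⟩ :=
    Finset.exists_ne_map_eq_of_card_lt_of_maps_to
      (s := Finset.range (d+1)) (t := Finset.range d)
      (by simp) (fun k _ => Finset.mem_range.2 (Nat.mod_lt _ hdpos)) (f := fun k => 2^(k+1) % d)
  have hsmul_eq : (2^(i+1) : ℕ) • Tpt = (2^(j+1) : ℕ) • Tpt := by
    rw [← mod_addOrderOf_nsmul Tpt (2^(i+1)), ← mod_addOrderOf_nsmul Tpt (2^(j+1)), ← hd, hmod]
  obtain ⟨xi, yi, hi', ei, vi⟩ := pow_smul_val i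
  obtain ⟨xj, yj, hj', ej, vj⟩ := pow_smul_val j
  rw [ei, ej] at hsmul_eq
  have hx : xi = xj := by
    cases hsmul_eq
    rfl
  rw [hx, vj] at vi
  have : (i:ℤ) = j := by omega
  exact hij (by exact_mod_cast this)
end

section
/- Let x, y be rational numbers with y² = x³ + 9x and x ≠ −3. Set t = (3 − x)/(3 + x) and s = −2y/(x + 3)². Then t⁴ − 1 = −6s², i.e., (t, s) is a rational point on the curve C : t⁴ − 1 = −6s². -/
/-- The map `h(x, y) = ((3 - x)/(3 + x), -2y/(x + 3)²)` sends rational points of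
`E' : y² = x³ + 9x` (with `x ≠ -3`) to rational points of the curve `C : t⁴ - 1 = -6s²`. -/
theorem map_to_C (x y : ℚ) (hxy : y ^ 2 = x ^ 3 + 9 * x) (hx : x ≠ -3) :
    ((3 - x) / (3 + x)) ^ 4 - 1 = -(6 * (-(2 * y) / (x + 3) ^ 2) ^ 2) := by
  have h' : (3 : ℚ) + x ≠ 0 := by intro h'; apply hx; linarith
  have h : x + 3 ≠ 0 := by intro h; apply hx; linarith
  field_simp
  linear_combination (24 * (3 + x) ^ 4) * hxy
end

section
/- For every rational number t with t(t−1)(t+1)(t²+1)(t⁴+34t²+1) ≠ 0, and for every pair of indices 1 ≤ i < j ≤ 6, the rational number aᵢ(t)·aⱼ(t) + 1 is the square of a rational number. -/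
def a1 (t : ℚ) : ℚ := -(9 * (t ^ 2 + 1)) / (8 * (t - 1) * (t + 1))

def a2 (t : ℚ) : ℚ :=
  (t ^ 2 - 7) * (t ^ 2 + 1) * (7 * t ^ 2 - 1) / (8 * (t - 1) ^ 3 * (t + 1) ^ 3)

def a3 (t : ℚ) : ℚ := 8 * (t - 1) ^ 3 * (t + 1) ^ 3 / (9 * (t ^ 2 + 1) ^ 3)

def a4 (t : ℚ) : ℚ :=
  -(2 * (t ^ 2 + 5) * (5 * t ^ 2 + 1)) / (9 * (t - 1) * (t + 1) * (t ^ 2 + 1))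

def a5 (t : ℚ) : ℚ :=
  -(2 * t * (t ^ 2 - 4 * t - 3) * (3 * t ^ 2 - 4 * t - 1) * (t ^ 3 + 8 * t ^ 2 + 5 * t + 4) *
      (4 * t ^ 3 - 5 * t ^ 2 + 8 * t - 1)) /
    ((t - 1) * (t + 1) * (t ^ 2 + 1) * (t ^ 4 + 34 * t ^ 2 + 1) ^ 2)

def a6 (t : ℚ) : ℚ :=
  2 * t * (t ^ 2 + 4 * t - 3) * (3 * t ^ 2 + 4 * t - 1) * (t ^ 3 - 8 * t ^ 2 + 5 * t - 4) *
      (4 * t ^ 3 + 5 * t ^ 2 + 8 * t + 1) /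
    ((t - 1) * (t + 1) * (t ^ 2 + 1) * (t ^ 4 + 34 * t ^ 2 + 1) ^ 2)

/-- The family member `aᵢ(t)` for `1 ≤ i ≤ 6` (and `0` for other indices). -/
def aFam : ℕ → ℚ → ℚ
  | 1 => a1
  | 2 => a2
  | 3 => a3
  | 4 => a4
  | 5 => a5
  | 6 => a6
  | _ => fun _ => 0

set_option maxHeartbeats 2000000 in
/-- For every admissible parameter `t`, any two distinct members of the family multiply to
one less than a rational square. -/
theorem family_pairwise_square (t : ℚ)
    (ht : t * (t - 1) * (t + 1) * (t ^ 2 + 1) * (t ^ 4 + 34 * t ^ 2 + 1) ≠ 0)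
    (i j : ℕ) (hi : 1 ≤ i) (hij : i < j) (hj : j ≤ 6) :
    ∃ r : ℚ, aFam i t * aFam j t + 1 = r ^ 2 := by
  have h0 : t ≠ 0 := fun h => ht (by rw [h]; ring)
  have h1 : t - 1 ≠ 0 := fun h => ht (by rw [show t = 1 by linarith]; ring)
  have h2 : t + 1 ≠ 0 := fun h => ht (by rw [show t = -1 by linarith]; ring)
  have h3 : t ^ 2 + 1 ≠ 0 := by positivity
  have h4 : t ^ 4 + 34 * t ^ 2 + 1 ≠ 0 := by positivity
  have hi5 : i ≤ 5 := by omega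
  interval_cases i <;> interval_cases j
  · refine ⟨((8 + 256*t^2 + (-528)*t^4 + 256*t^6 + 8*t^8) : ℚ) / (64 * (t - 1) ^ 4 * (t + 1) ^ 4), ?_⟩
    show aFam 1 t * aFam 2 t + 1 = _
    simp only [aFam, a1, a2, a3, a4, a5, a6]
    field_simp
    ring
  · refine ⟨(((-144)*t + (-144)*t^3 + 144*t^5 + 144*t^7) : ℚ) / (72 * (t - 1) ^ 1 * (t + 1) ^ 1 * (t ^ 2 + 1) ^ 3), ?_⟩
    show aFam 1 t * aFam 3 t + 1 = _
    simp only [aFam, a1, a2, a3, a4, a5, a6]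
    field_simp
    ring
  · refine ⟨(((-108) + (-108)*t^2 + 108*t^4 + 108*t^6) : ℚ) / (72 * (t - 1) ^ 2 * (t + 1) ^ 2 * (t ^ 2 + 1) ^ 1), ?_⟩
    show aFam 1 t * aFam 4 t + 1 = _
    simp only [aFam, a1, a2, a3, a4, a5, a6]
    field_simp
    ring
  · refine ⟨((8 + (-108)*t + (-40)*t^2 + (-3888)*t^3 + (-10296)*t^4 + (-7452)*t^5 + 10328*t^6 + 10328*t^8 + 7452*t^9 + (-10296)*t^10 + 3888*t^11 + (-40)*t^12 + 108*t^13 + 8*t^14) : ℚ) / (8 * (t - 1) ^ 2 * (t + 1) ^ 2 * (t ^ 2 + 1) ^ 1 * (t ^ 4 + 34 * t ^ 2 + 1) ^ 2), ?_⟩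
    show aFam 1 t * aFam 5 t + 1 = _
    simp only [aFam, a1, a2, a3, a4, a5, a6]
    field_simp
    ring
  · refine ⟨((8 + 108*t + (-40)*t^2 + 3888*t^3 + (-10296)*t^4 + 7452*t^5 + 10328*t^6 + 10328*t^8 + (-7452)*t^9 + (-10296)*t^10 + (-3888)*t^11 + (-40)*t^12 + (-108)*t^13 + 8*t^14) : ℚ) / (8 * (t - 1) ^ 2 * (t + 1) ^ 2 * (t ^ 2 + 1) ^ 1 * (t ^ 4 + 34 * t ^ 2 + 1) ^ 2), ?_⟩
    show aFam 1 t * aFam 6 t + 1 = _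
    simp only [aFam, a1, a2, a3, a4, a5, a6]
    field_simp
    ring
  · refine ⟨((96 + (-192)*t^2 + (-96)*t^4 + 384*t^6 + (-96)*t^8 + (-192)*t^10 + 96*t^12) : ℚ) / (72 * (t - 1) ^ 3 * (t + 1) ^ 3 * (t ^ 2 + 1) ^ 3), ?_⟩
    show aFam 2 t * aFam 3 t + 1 = _
    simp only [aFam, a1, a2, a3, a4, a5, a6]
    field_simp
    ring
  · refine ⟨((12 + (-468)*t^2 + 456*t^4 + 456*t^6 + (-468)*t^8 + 12*t^10) : ℚ) / (72 * (t - 1) ^ 4 * (t + 1) ^ 4 * (t ^ 2 + 1) ^ 1), ?_⟩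
    show aFam 2 t * aFam 4 t + 1 = _
    simp only [aFam, a1, a2, a3, a4, a5, a6]
    field_simp
    ring
  · refine ⟨(((-8) + (-84)*t + 40*t^2 + (-2256)*t^3 + 10304*t^4 + 20400*t^5 + (-10368)*t^6 + 2256*t^7 + (-20624)*t^8 + (-40632)*t^9 + 20624*t^10 + 2256*t^11 + 10368*t^12 + 20400*t^13 + (-10304)*t^14 + (-2256)*t^15 + (-40)*t^16 + (-84)*t^17 + 8*t^18) : ℚ) / (8 * (t - 1) ^ 4 * (t + 1) ^ 4 * (t ^ 2 + 1) ^ 1 * (t ^ 4 + 34 * t ^ 2 + 1) ^ 2), ?_⟩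
    show aFam 2 t * aFam 5 t + 1 = _
    simp only [aFam, a1, a2, a3, a4, a5, a6]
    field_simp
    ring
  · refine ⟨(((-8) + 84*t + 40*t^2 + 2256*t^3 + 10304*t^4 + (-20400)*t^5 + (-10368)*t^6 + (-2256)*t^7 + (-20624)*t^8 + 40632*t^9 + 20624*t^10 + (-2256)*t^11 + 10368*t^12 + (-20400)*t^13 + (-10304)*t^14 + 2256*t^15 + (-40)*t^16 + 84*t^17 + 8*t^18) : ℚ) / (8 * (t - 1) ^ 4 * (t + 1) ^ 4 * (t ^ 2 + 1) ^ 1 * (t ^ 4 + 34 * t ^ 2 + 1) ^ 2), ?_⟩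
    show aFam 2 t * aFam 6 t + 1 = _
    simp only [aFam, a1, a2, a3, a4, a5, a6]
    field_simp
    ring
  · refine ⟨(((-9) + (-315)*t^2 + (-306)*t^4 + 306*t^6 + 315*t^8 + 9*t^10) : ℚ) / (81 * (t - 1) ^ 1 * (t + 1) ^ 1 * (t ^ 2 + 1) ^ 4), ?_⟩
    show aFam 3 t * aFam 4 t + 1 = _
    simp only [aFam, a1, a2, a3, a4, a5, a6]
    field_simp
    ring
  · refine ⟨(((-9) + (-96)*t + 9*t^2 + (-3072)*t^3 + 11700*t^4 + 6528*t^5 + 34956*t^6 + 3072*t^7 + 23274*t^8 + (-12864)*t^9 + (-23274)*t^10 + 3072*t^11 + (-34956)*t^12 + 6528*t^13 + (-11700)*t^14 + (-3072)*t^15 + (-9)*t^16 + (-96)*t^17 + 9*t^18) : ℚ) / (9 * (t - 1) ^ 1 * (t + 1) ^ 1 * (t ^ 2 + 1) ^ 4 * (t ^ 4 + 34 * t ^ 2 + 1) ^ 2), ?_⟩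
    show aFam 3 t * aFam 5 t + 1 = _
    simp only [aFam, a1, a2, a3, a4, a5, a6]
    field_simp
    ring
  · refine ⟨(((-9) + 96*t + 9*t^2 + 3072*t^3 + 11700*t^4 + (-6528)*t^5 + 34956*t^6 + (-3072)*t^7 + 23274*t^8 + 12864*t^9 + (-23274)*t^10 + (-3072)*t^11 + (-34956)*t^12 + (-6528)*t^13 + (-11700)*t^14 + 3072*t^15 + (-9)*t^16 + 96*t^17 + 9*t^18) : ℚ) / (9 * (t - 1) ^ 1 * (t + 1) ^ 1 * (t ^ 2 + 1) ^ 4 * (t ^ 4 + 34 * t ^ 2 + 1) ^ 2), ?_⟩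
    show aFam 3 t * aFam 6 t + 1 = _
    simp only [aFam, a1, a2, a3, a4, a5, a6]
    field_simp
    ring
  · refine ⟨(((-9) + 120*t + 18*t^2 + 4584*t^3 + 11682*t^4 + 16632*t^5 + 23274*t^6 + (-21336)*t^7 + (-21336)*t^9 + (-23274)*t^10 + 16632*t^11 + (-11682)*t^12 + 4584*t^13 + (-18)*t^14 + 120*t^15 + 9*t^16) : ℚ) / (9 * (t - 1) ^ 2 * (t + 1) ^ 2 * (t ^ 2 + 1) ^ 2 * (t ^ 4 + 34 * t ^ 2 + 1) ^ 2), ?_⟩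
    show aFam 4 t * aFam 5 t + 1 = _
    simp only [aFam, a1, a2, a3, a4, a5, a6]
    field_simp
    ring
  · refine ⟨(((-9) + (-120)*t + 18*t^2 + (-4584)*t^3 + 11682*t^4 + (-16632)*t^5 + 23274*t^6 + 21336*t^7 + 21336*t^9 + (-23274)*t^10 + (-16632)*t^11 + (-11682)*t^12 + (-4584)*t^13 + (-18)*t^14 + (-120)*t^15 + 9*t^16) : ℚ) / (9 * (t - 1) ^ 2 * (t + 1) ^ 2 * (t ^ 2 + 1) ^ 2 * (t ^ 4 + 34 * t ^ 2 + 1) ^ 2), ?_⟩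
    show aFam 4 t * aFam 6 t + 1 = _
    simp only [aFam, a1, a2, a3, a4, a5, a6]
    field_simp
    ring
  · refine ⟨(((-1) + 152*t^2 + 12644*t^4 + 175016*t^6 + (-1389381)*t^8 + (-1156848)*t^10 + 1156848*t^14 + 1389381*t^16 + (-175016)*t^18 + (-12644)*t^20 + (-152)*t^22 + 1*t^24) : ℚ) / (1 * (t - 1) ^ 2 * (t + 1) ^ 2 * (t ^ 2 + 1) ^ 2 * (t ^ 4 + 34 * t ^ 2 + 1) ^ 4), ?_⟩
    show aFam 5 t * aFam 6 t + 1 = _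
    simp only [aFam, a1, a2, a3, a4, a5, a6]
    field_simp
    ring
end

section
/- For every rational number t with t(t−1)(t+1)(t²+1) ≠ 0, the first four members of the family satisfy the quadruple condition (a₁(t)·a₂(t)·a₃(t)·a₄(t) − 3)² = 4(a₁(t)·a₂(t) + a₃(t)·a₄(t) + 3). -/
/-- The first four members of the family satisfy the quadruple condition
`(abcd - 3)² = 4(ab + cd + 3)`. -/
theorem quadruple_condition (t : ℚ) (ht : t * (t - 1) * (t + 1) * (t ^ 2 + 1) ≠ 0) :
    (a1 t * a2 t * a3 t * a4 t - 3) ^ 2 = 4 * (a1 t * a2 t + a3 t * a4 t + 3) := by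
  have h1 : t - 1 ≠ 0 := by intro h; apply ht; rw [h]; ring
  have h2 : t + 1 ≠ 0 := by intro h; apply ht; rw [h]; ring
  have h3 : t ^ 2 + 1 ≠ 0 := by positivity
  unfold a1 a2 a3 a4
  field_simp
  ring
end

section
/- Let t, x, y be rational numbers with t ≠ 1 and (x² − 1)(y² − 1) = (2t² + t − 1)/(t − 1). Set m' = (2t² + t − 1)/(t − 1), T = 2(x² − 1)y + 2x² − (2 − m'), and S = 2Tx. Then S² = T³ − 2·(2t² − t + 1)/(t − 1)·T² + (2t − 1)²(t + 1)²/(t − 1)²·T. -/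
private lemma aux_map_D_to_E (x y m T S : ℚ) (hm : m = (x ^ 2 - 1) * (y ^ 2 - 1))
    (hT : T = 2 * (x ^ 2 - 1) * y + 2 * x ^ 2 - (2 - m)) (hS : S = 2 * T * x) :
    S ^ 2 = T ^ 3 - 2 * (m - 2) * T ^ 2 + m ^ 2 * T := by
  subst hm hT hS; ring

/-- The birational map from `D : (x² - 1)(y² - 1) = (2t² + t - 1)/(t - 1)` to the elliptic
curve `E : S² = T³ - 2(2t² - t + 1)/(t - 1)·T² + (2t - 1)²(t + 1)²/(t - 1)²·T`, given by
`T = 2(x² - 1)y + 2x² - (2 - m')` and `S = 2Tx` where `m' = (2t² + t - 1)/(t - 1)`. -/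
theorem map_D_to_E (t x y : ℚ) (ht : t ≠ 1)
    (hxy : (x ^ 2 - 1) * (y ^ 2 - 1) = (2 * t ^ 2 + t - 1) / (t - 1)) :
    let m' : ℚ := (2 * t ^ 2 + t - 1) / (t - 1)
    let T : ℚ := 2 * (x ^ 2 - 1) * y + 2 * x ^ 2 - (2 - m')
    let S : ℚ := 2 * T * x
    S ^ 2 = T ^ 3 - 2 * ((2 * t ^ 2 - t + 1) / (t - 1)) * T ^ 2 +
      (2 * t - 1) ^ 2 * (t + 1) ^ 2 / (t - 1) ^ 2 * T := by
  have h1 : t - 1 ≠ 0 := sub_ne_zero.mpr ht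
  have hA : (2 * t ^ 2 - t + 1) / (t - 1) = (2 * t ^ 2 + t - 1) / (t - 1) - 2 := by
    field_simp; ring
  have hB : (2 * t - 1) ^ 2 * (t + 1) ^ 2 / (t - 1) ^ 2 =
      ((2 * t ^ 2 + t - 1) / (t - 1)) ^ 2 := by
    rw [div_pow]; ring_nf
  intro m' T S
  have key := aux_map_D_to_E x y m' T S hxy.symm rfl rfl
  rw [hA, hB]
  exact key
end

section
/- Let k be a positive integer and let (x_k, y_k) denote the affine coordinates of k•T on E' : y² = x³ + 9x, where T = (4, 10). Then v₃(x_k) < 0 if and only if k ≡ 0 (mod 3). -/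
instance : Fact (Nat.Prime 3) := ⟨by norm_num⟩

local notation "ν" => padicNorm 3

lemma pn_sq (a : ℚ) : ν (a^2) = (ν a)^2 := by
  rw [sq, padicNorm.mul, sq]

lemma pn_add_eq_left {a b : ℚ} (h : ν b < ν a) : ν (a+b) = ν a := by
  rw [padicNorm.add_eq_max_of_ne h.ne']; exact max_eq_left h.le

lemma pn_three : ν 3 = 1/3 := by
  have := padicNorm.padicNorm_p_of_prime (p := 3)
  norm_num at this ⊢; exact this

lemma pn_two : ν 2 = 1 := by
  have := (padicNorm.int_eq_one_iff (p := 3) 2).mpr (by decide)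
  exact_mod_cast this

lemma pn_five : ν 5 = 1 := by
  have := (padicNorm.int_eq_one_iff (p := 3) 5).mpr (by decide)
  exact_mod_cast this

lemma pn_nine : ν 9 = 1/9 := by
  have : (9:ℚ) = 3 * 3 := by norm_num
  rw [this, padicNorm.mul, pn_three]; norm_num

lemma pn_18 : ν 18 = 1/9 := by
  have : (18:ℚ) = 2 * 9 := by norm_num
  rw [this, padicNorm.mul, pn_two, pn_nine]; norm_num

lemma pn_y_sq {x y : ℚ} (e : y^2 = x^3 + 9*x) (hx : 1 ≤ ν x) :
    (ν y)^2 = (ν x)^3 := by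
  have hx2 : ν 9 < ν (x^2) := by
    rw [pn_nine, pn_sq]; nlinarith
  have h1 : ν (x^2 + 9) = (ν x)^2 := by rw [pn_add_eq_left hx2, pn_sq]
  have h2 : y^2 = x * (x^2 + 9) := by linear_combination e
  calc (ν y)^2 = ν (y^2) := (pn_sq y).symm
    _ = ν (x * (x^2+9)) := by rw [h2]
    _ = ν x * (ν x)^2 := by rw [padicNorm.mul, h1]
    _ = (ν x)^3 := by ring

lemma pn_y_ge {x y : ℚ} (e : y^2 = x^3 + 9*x) (hx : 1 ≤ ν x) : 1 ≤ ν y := by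
  have h := pn_y_sq e hx
  have h0 : 0 ≤ ν y := padicNorm.nonneg y
  have h1 : 1 ≤ (ν x)^3 := one_le_pow₀ hx
  nlinarith

lemma y_ne_zero {x y : ℚ} (e : y^2 = x^3 + 9*x) (hx : 1 ≤ ν x) : y ≠ 0 := by
  intro h
  have := pn_y_ge e hx
  rw [h, padicNorm.zero] at this
  linarith

lemma one_le_mul' {a b : ℚ} (ha : 1 ≤ a) (hb : 1 ≤ b) : 1 ≤ a*b := by nlinarith


set_option maxHeartbeats 800000 in
/-- The third intersection also has `ν x₃ ≥ 1`. -/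
lemma coreA {x₁ x₂ L m x₃ : ℚ}
    (hx₃ : x₃ = L^2 - x₁ - x₂)
    (b₁ : 1 ≤ ν x₁) (b₂ : 1 ≤ ν x₂)
    (hσ₂ : x₁*x₂ + x₁*x₃ + x₂*x₃ = 9 - 2*L*m)
    (hσ₃ : x₁*x₂*x₃ = m^2) :
    1 ≤ ν x₃ := by
  have n₁0 : (0:ℚ) < ν x₁ := lt_of_lt_of_le one_pos b₁
  have n₂0 : (0:ℚ) < ν x₂ := lt_of_lt_of_le one_pos b₂
  have n₃0 : 0 ≤ ν x₃ := padicNorm.nonneg _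
  have l0 : 0 ≤ ν L := padicNorm.nonneg _
  have m0 : 0 ≤ ν m := padicNorm.nonneg _
  have hmu : (ν m)^2 = ν x₁ * ν x₂ * ν x₃ := by
    rw [← pn_sq, ← hσ₃, padicNorm.mul, padicNorm.mul]
  have hl : (ν L)^2 ≤ ν x₁ ∨ (ν L)^2 ≤ ν x₂ ∨ (ν L)^2 ≤ ν x₃ := by
    have h1 : L^2 = x₁ + (x₂ + x₃) := by linear_combination -hx₃
    have h2 : (ν L)^2 = ν (x₁ + (x₂ + x₃)) := by rw [← pn_sq, h1]
    have h3 := padicNorm.nonarchimedean (p := 3) (q := x₁) (r := x₂ + x₃)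
    have h4 := padicNorm.nonarchimedean (p := 3) (q := x₂) (r := x₃)
    rw [← h2] at h3
    rcases le_max_iff.mp h3 with h | h
    · exact Or.inl h
    · rcases le_max_iff.mp (h.trans h4) with h' | h'
      · exact Or.inr (Or.inl h')
      · exact Or.inr (Or.inr h')
  by_contra hc
  push_neg at hc
  have hb : ν (x₃*(x₁+x₂)) < ν (x₁*x₂) := by
    rw [padicNorm.mul, padicNorm.mul]
    have h5 : ν (x₁ + x₂) ≤ max (ν x₁) (ν x₂) := padicNorm.nonarchimedean
    rcases max_cases (ν x₁) (ν x₂) with ⟨hm', _⟩ | ⟨hm', _⟩ <;> rw [hm'] at h5 <;> nlinarith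
  have hs : ν (x₁*x₂ + x₃*(x₁+x₂)) = ν x₁ * ν x₂ := by
    rw [pn_add_eq_left hb, padicNorm.mul]
  have hrw : x₁*x₂ + x₃*(x₁+x₂) = 9 + (-(2*L*m)) := by linear_combination hσ₂
  rw [hrw] at hs
  have h6 : ν (9 + (-(2*L*m))) ≤ max (ν 9) (ν (-(2*L*m))) := padicNorm.nonarchimedean
  rw [hs, padicNorm.neg, pn_nine] at h6
  have h7 : ν (2*L*m) = ν L * ν m := by
    rw [padicNorm.mul, padicNorm.mul, pn_two, one_mul]
  rw [h7] at h6
  rcases le_max_iff.mp h6 with h | h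
  · nlinarith
  · have h8 : (ν x₁ * ν x₂)^2 ≤ (ν L * ν m)^2 :=
      pow_le_pow_left₀ (by positivity) h 2
    have h9 : (ν x₁ * ν x₂)^2 ≤ (ν L)^2 * (ν x₁ * ν x₂ * ν x₃) := by
      calc (ν x₁ * ν x₂)^2 ≤ (ν L * ν m)^2 := h8
        _ = (ν L)^2 * (ν m)^2 := by ring
        _ = (ν L)^2 * (ν x₁ * ν x₂ * ν x₃) := by rw [hmu]
    rcases hl with h' | h' | h'
    · have h10 : (ν x₁ * ν x₂)^2 ≤ ν x₁ * (ν x₁ * ν x₂ * ν x₃) :=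
        h9.trans (mul_le_mul_of_nonneg_right h' (by positivity))
      nlinarith [mul_pos (mul_pos (mul_pos n₁0 n₁0) n₂0)
        (sub_pos.mpr (lt_of_lt_of_le hc b₂))]
    · have h10 : (ν x₁ * ν x₂)^2 ≤ ν x₂ * (ν x₁ * ν x₂ * ν x₃) :=
        h9.trans (mul_le_mul_of_nonneg_right h' (by positivity))
      nlinarith [mul_pos (mul_pos (mul_pos n₂0 n₂0) n₁0)
        (sub_pos.mpr (lt_of_lt_of_le hc b₁))]
    · have h10 : (ν x₁ * ν x₂)^2 ≤ ν x₃ * (ν x₁ * ν x₂ * ν x₃) :=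
        h9.trans (mul_le_mul_of_nonneg_right h' (by positivity))
      have hsq : (ν x₃)^2 < 1 := by nlinarith
      nlinarith [mul_pos (mul_pos n₁0 n₂0)
        (sub_pos.mpr (lt_of_lt_of_le hsq (one_le_mul' b₁ b₂)))]

/-- The collinearity identity. -/
lemma coreC {x₁ y₁ x₂ y₂ L m x₃ y₃ : ℚ}
    (hy₁ : y₁ = L*x₁ + m) (hy₂ : y₂ = L*x₂ + m)
    (hx₃ : x₃ = L^2 - x₁ - x₂) (hy₃ : y₃ = L*x₃ + m)
    (hσ₂ : x₁*x₂ + x₁*x₃ + x₂*x₃ = 9 - 2*L*m)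
    (hσ₃ : x₁*x₂*x₃ = m^2) :
    x₁*(y₂*y₃) + x₂*(y₁*y₃) + x₃*(y₁*y₂) = 18*(L*m) := by
  linear_combination (x₂*(L*x₃+m) + x₃*(L*x₂+m)) * hy₁ + (x₁*(L*x₃+m) + x₃*y₁) * hy₂ +
    (x₁*y₂ + x₂*y₁) * hy₃ + 2*L*m*hσ₂ + 3*L^2*hσ₃ + m^2*hx₃

lemma coreE {x₁ x₂ L m x₃ y₃ : ℚ}
    (hx₃ : x₃ = L^2 - x₁ - x₂) (hy₃ : y₃ = L*x₃ + m)
    (hσ₂ : x₁*x₂ + x₁*x₃ + x₂*x₃ = 9 - 2*L*m)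
    (hσ₃ : x₁*x₂*x₃ = m^2) :
    y₃^2 = x₃^3 + 9*x₃ := by
  linear_combination (y₃ + L*x₃ + m) * hy₃ - x₃^2 * hx₃ - hσ₃ + x₃ * hσ₂

set_option maxHeartbeats 800000 in
/-- Core computation: three collinear points on the curve. -/
lemma core {x₁ y₁ x₂ y₂ L m x₃ y₃ : ℚ}
    (hy₁ : y₁ = L*x₁ + m) (hy₂ : y₂ = L*x₂ + m)
    (hx₃ : x₃ = L^2 - x₁ - x₂) (hy₃ : y₃ = L*x₃ + m)
    (e₁ : y₁^2 = x₁^3 + 9*x₁) (e₂ : y₂^2 = x₂^3 + 9*x₂)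
    (b₁ : 1 ≤ ν x₁) (b₂ : 1 ≤ ν x₂)
    (hσ₂ : x₁*x₂ + x₁*x₃ + x₂*x₃ = 9 - 2*L*m)
    (hσ₃ : x₁*x₂*x₃ = m^2) :
    1 ≤ ν x₃ ∧ ν (x₁/y₁ + x₂/y₂ + x₃/y₃) < 1 := by
  have n₁0 : (0:ℚ) < ν x₁ := lt_of_lt_of_le one_pos b₁
  have n₂0 : (0:ℚ) < ν x₂ := lt_of_lt_of_le one_pos b₂
  have l0 : 0 ≤ ν L := padicNorm.nonneg _
  have m0 : 0 ≤ ν m := padicNorm.nonneg _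
  have hmu : (ν m)^2 = ν x₁ * ν x₂ * ν x₃ := by
    rw [← pn_sq, ← hσ₃, padicNorm.mul, padicNorm.mul]
  have hl : (ν L)^2 ≤ ν x₁ ∨ (ν L)^2 ≤ ν x₂ ∨ (ν L)^2 ≤ ν x₃ := by
    have h1 : L^2 = x₁ + (x₂ + x₃) := by linear_combination -hx₃
    have h2 : (ν L)^2 = ν (x₁ + (x₂ + x₃)) := by rw [← pn_sq, h1]
    have h3 := padicNorm.nonarchimedean (p := 3) (q := x₁) (r := x₂ + x₃)
    have h4 := padicNorm.nonarchimedean (p := 3) (q := x₂) (r := x₃)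
    rw [← h2] at h3
    rcases le_max_iff.mp h3 with h | h
    · exact Or.inl h
    · rcases le_max_iff.mp (h.trans h4) with h' | h'
      · exact Or.inr (Or.inl h')
      · exact Or.inr (Or.inr h')
  have hn₃ : 1 ≤ ν x₃ := coreA hx₃ b₁ b₂ hσ₂ hσ₃
  have n₃0 : 0 ≤ ν x₃ := padicNorm.nonneg _
  refine ⟨hn₃, ?_⟩
  have e₃ : y₃^2 = x₃^3 + 9*x₃ := coreE hx₃ hy₃ hσ₂ hσ₃
  have hy₁0 : y₁ ≠ 0 := y_ne_zero e₁ b₁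
  have hy₂0 : y₂ ≠ 0 := y_ne_zero e₂ b₂
  have hy₃0 : y₃ ≠ 0 := y_ne_zero e₃ hn₃
  have w₁ := pn_y_sq e₁ b₁
  have w₂ := pn_y_sq e₂ b₂
  have w₃ := pn_y_sq e₃ hn₃
  have w₁1 := pn_y_ge e₁ b₁
  have w₂1 := pn_y_ge e₂ b₂
  have w₃1 := pn_y_ge e₃ hn₃
  have hC := coreC hy₁ hy₂ hx₃ hy₃ hσ₂ hσ₃
  have hI : x₁/y₁ + x₂/y₂ + x₃/y₃ = 18*(L*m)/(y₁*(y₂*y₃)) := by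
    rw [show (18*(L*m) : ℚ) = x₁*(y₂*y₃) + x₂*(y₁*y₃) + x₃*(y₁*y₂) from hC.symm]
    field_simp
  rw [hI, padicNorm.div, padicNorm.mul, padicNorm.mul, padicNorm.mul, padicNorm.mul, pn_18]
  have hW : 1 ≤ ν y₁ * (ν y₂ * ν y₃) := one_le_mul' w₁1 (one_le_mul' w₂1 w₃1)
  have hWpos : 0 < ν y₁ * (ν y₂ * ν y₃) := lt_of_lt_of_le one_pos hW
  have key : ν L * ν m ≤ ν y₁ * (ν y₂ * ν y₃) := by
    have hsq : (ν L * ν m)^2 ≤ (ν y₁ * (ν y₂ * ν y₃))^2 := by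
      have e1 : (ν y₁ * (ν y₂ * ν y₃))^2 = (ν x₁)^3 * (ν x₂)^3 * (ν x₃)^3 := by
        rw [mul_pow, mul_pow, w₁, w₂, w₃]; ring
      have h9 : (ν L * ν m)^2 = (ν L)^2 * (ν x₁ * ν x₂ * ν x₃) := by
        rw [mul_pow, hmu]
      have hj : (ν L)^2 ≤ ν x₁ * ν x₂ * ν x₃ := by
        rcases hl with h' | h' | h'
        · exact h'.trans (by nlinarith [mul_le_mul_of_nonneg_left (one_le_mul' b₂ hn₃) n₁0.le])
        · exact h'.trans (by nlinarith [mul_le_mul_of_nonneg_left (one_le_mul' b₁ hn₃) n₂0.le])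
        · exact h'.trans (by nlinarith [mul_le_mul_of_nonneg_left (one_le_mul' b₁ b₂) n₃0])
      have hge1 : 1 ≤ ν x₁ * ν x₂ * ν x₃ := one_le_mul' (one_le_mul' b₁ b₂) hn₃
      have hQ0 : 0 ≤ ν x₁ * ν x₂ * ν x₃ := by positivity
      have s1 : (ν L)^2 * (ν x₁ * ν x₂ * ν x₃) ≤
          (ν x₁ * ν x₂ * ν x₃) * (ν x₁ * ν x₂ * ν x₃) :=
        mul_le_mul_of_nonneg_right hj hQ0
      have s2 : (ν x₁ * ν x₂ * ν x₃) * (ν x₁ * ν x₂ * ν x₃) ≤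
          (ν x₁)^3 * (ν x₂)^3 * (ν x₃)^3 := by
        nlinarith [mul_nonneg (mul_nonneg hQ0 hQ0) (sub_nonneg.mpr hge1)]
      rw [e1, h9]
      linarith
    exact (pow_le_pow_iff_left₀ (by positivity) (by positivity) two_ne_zero).mp hsq
  have hfin : 1/9 * (ν L * ν m) / (ν y₁ * (ν y₂ * ν y₃)) ≤ 1/9 := by
    rw [div_le_iff₀ hWpos]
    linarith [key]
  linarith

open WeierstrassCurve.Affine WeierstrassCurve.Affine.Point

lemma eqn_of_ns {x y : ℚ} (h : Ecurve.Nonsingular x y) : y^2 = x^3 + 9*x := by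
  rw [WeierstrassCurve.Affine.nonsingular_iff, WeierstrassCurve.Affine.equation_iff] at h
  have := h.1
  simp only [Ecurve] at this
  linear_combination this

lemma pn_four : ν 4 = 1 := by
  have := (padicNorm.int_eq_one_iff (p := 3) 4).mpr (by decide)
  exact_mod_cast this

lemma negY_eval (x y : ℚ) : Ecurve.negY x y = -y := by
  simp [WeierstrassCurve.Affine.negY, Ecurve]

lemma addX_eval (x L : ℚ) : Ecurve.addX x 4 L = L^2 - x - 4 := by
  simp [WeierstrassCurve.Affine.addX, Ecurve]

lemma addY_eval (x y L : ℚ) :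
    Ecurve.addY x 4 y L = -(L*(L^2 - x - 4) + (y - L*x)) := by
  rw [WeierstrassCurve.Affine.addY, WeierstrassCurve.Affine.negAddY, negY_eval, addX_eval]
  ring

/-- The invariant carried through the induction. -/
def GoodN (n : ℕ) (P : Ecurve.Point) : Prop :=
  (P = 0 ∧ ν (n:ℚ) < 1) ∨
  ∃ x y, ∃ h : Ecurve.Nonsingular x y, P = WeierstrassCurve.Affine.Point.some _ _ h ∧
    1 ≤ ν x ∧ ν (x/y - n) < 1

lemma pn_C : ν ((4:ℚ)/10 - 1) = 1/3 := by
  have h : ((4:ℚ)/10 - 1) = -(3/5) := by norm_num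
  rw [h, padicNorm.neg, padicNorm.div, pn_three, pn_five]
  norm_num

set_option maxHeartbeats 1000000 in
lemma goodN_step (n : ℕ) (P : Ecurve.Point) (hg : GoodN n P) : GoodN (n+1) (P + Tpt) := by
  have hTpt : Tpt = WeierstrassCurve.Affine.Point.some _ _ Tpt_nonsingular := rfl
  rcases hg with ⟨rfl, hn⟩ | ⟨x, y, h, rfl, hb, hc⟩
  · -- P = 0
    rw [zero_add]
    right
    refine ⟨4, 10, Tpt_nonsingular, rfl, by rw [pn_four], ?_⟩
    have hrw : (4:ℚ)/10 - ((n:ℕ)+1 : ℕ) = ((4:ℚ)/10 - 1) + (-(n:ℚ)) := by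
      push_cast; ring
    rw [hrw]
    calc ν (((4:ℚ)/10 - 1) + (-(n:ℚ))) ≤ max (ν ((4:ℚ)/10 - 1)) (ν (-(n:ℚ))) :=
          padicNorm.nonarchimedean
      _ < 1 := by
          rw [pn_C, padicNorm.neg]
          exact max_lt (by norm_num) hn
  · -- P = some h
    have e₁ := eqn_of_ns h
    have hy0 : y ≠ 0 := y_ne_zero e₁ hb
    by_cases hx4 : x = 4
    · by_cases hy10 : y = Ecurve.negY 4 10
      · -- opposite points: sum is zero
        left
        rw [hTpt]
        refine ⟨add_of_Y_eq hx4 hy10, ?_⟩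
        rw [negY_eval] at hy10
        have hrw : (((n:ℕ)+1 : ℕ) : ℚ) = (-(x/y - n)) + (3/5) := by
          rw [hx4, hy10]; push_cast; ring
        rw [hrw]
        calc ν ((-(x/y - n)) + (3/5 : ℚ)) ≤ max (ν (-(x/y - n))) (ν ((3:ℚ)/5)) :=
              padicNorm.nonarchimedean
          _ < 1 := by
              rw [padicNorm.neg, padicNorm.div, pn_three, pn_five]
              exact max_lt hc (by norm_num)
      · -- tangent case
        have hy10' : y = 10 := by
          rw [negY_eval] at hy10
          have hz : (y - 10) * (y + 10) = 0 := by
            rw [hx4] at e₁; linear_combination e₁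
          rcases mul_eq_zero.mp hz with h' | h'
          · linarith [sub_eq_zero.mp h']
          · exact absurd (by linarith : y = -10) hy10
        subst hx4; subst hy10'
        have hxy : ¬((4:ℚ) = 4 ∧ (10:ℚ) = Ecurve.negY 4 10) := fun h' => hy10 h'.2
        right
        set L : ℚ := Ecurve.slope 4 4 10 10 with hLdef
        have hLval : L = 57/20 := by
          rw [hLdef, slope_of_Y_ne rfl hy10, negY_eval]
          simp only [Ecurve]
          norm_num
        have hcore := core (x₁ := 4) (y₁ := 10) (x₂ := 4) (y₂ := 10) (L := L)
          (m := 10 - L*4) (x₃ := L^2 - 4 - 4) (y₃ := L*(L^2-4-4) + (10 - L*4))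
          (by ring) (by ring) (by ring) rfl (by norm_num) (by norm_num)
          (by rw [pn_four]) (by rw [pn_four])
          (by rw [hLval]; norm_num) (by rw [hLval]; norm_num)
        refine ⟨Ecurve.addX 4 4 L, Ecurve.addY 4 4 10 L,
          nonsingular_add h Tpt_nonsingular hxy, ?_, ?_, ?_⟩
        · rw [hTpt]
          exact add_some hxy
        · rw [addX_eval]
          exact hcore.1
        · have key := hcore.2
          have hrw : Ecurve.addX 4 4 L / Ecurve.addY 4 4 10 L - (((n:ℕ)+1:ℕ) : ℚ) =
              (-((4:ℚ)/10 + 4/10 + (L^2-4-4)/(L*(L^2-4-4) + (10 - L*4)))) +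
              (((4:ℚ)/10 - n) + ((4:ℚ)/10 - 1)) := by
            rw [addX_eval, addY_eval]
            push_cast
            rw [div_neg]
            ring
          rw [hrw]
          calc ν _ ≤ max (ν (-((4:ℚ)/10 + 4/10 + (L^2-4-4)/(L*(L^2-4-4) + (10 - L*4)))))
                (ν (((4:ℚ)/10 - n) + ((4:ℚ)/10 - 1))) := padicNorm.nonarchimedean
            _ < 1 := by
                refine max_lt (by rw [padicNorm.neg]; exact key) ?_
                calc ν (((4:ℚ)/10 - n) + ((4:ℚ)/10 - 1)) ≤
                      max (ν ((4:ℚ)/10 - n)) (ν ((4:ℚ)/10 - 1)) := padicNorm.nonarchimedean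
                  _ < 1 := max_lt hc (by rw [pn_C]; norm_num)
    · -- chord case
      have hxy : ¬(x = 4 ∧ (y:ℚ) = Ecurve.negY 4 10) := fun h' => hx4 h'.1
      right
      set L : ℚ := Ecurve.slope x 4 y 10 with hLdef
      have hx4' : x - 4 ≠ 0 := sub_ne_zero.mpr hx4
      have hL : L * (x - 4) = y - 10 := by
        rw [hLdef, slope_of_X_ne hx4]
        exact div_mul_cancel₀ _ hx4'
      have hy₂lin : (10:ℚ) = L*4 + (y - L*x) := by linear_combination hL
      have hy2sq : (L*4 + (y - L*x))^2 = 100 := by rw [← hy₂lin]; norm_num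
      have hR : (x-4) * ((x^2+4*x+25) - L^2*(x+4) - 2*L*(y - L*x)) = 0 := by
        linear_combination -e₁ + hy2sq
      have R0 : (x^2+4*x+25) - L^2*(x+4) - 2*L*(y - L*x) = 0 := by
        rcases mul_eq_zero.mp hR with h' | h'
        · exact absurd h' hx4'
        · exact h'
      have hσ₂ : x*4 + x*(L^2 - x - 4) + 4*(L^2 - x - 4) = 9 - 2*L*(y - L*x) := by
        linear_combination -R0
      have hσ₃ : x*4*(L^2 - x - 4) = (y - L*x)^2 := by
        linear_combination (-x)*R0 - e₁
      have hcore := core (x₁ := x) (y₁ := y) (x₂ := 4) (y₂ := 10) (L := L)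
        (m := y - L*x) (x₃ := L^2 - x - 4) (y₃ := L*(L^2-x-4) + (y - L*x))
        (by ring) hy₂lin (by ring) rfl e₁ (by norm_num)
        hb (by rw [pn_four]) hσ₂ hσ₃
      refine ⟨Ecurve.addX x 4 L, Ecurve.addY x 4 y L,
        nonsingular_add h Tpt_nonsingular hxy, ?_, ?_, ?_⟩
      · rw [hTpt]
        exact add_some hxy
      · rw [addX_eval]
        exact hcore.1
      · have key := hcore.2
        have hrw : Ecurve.addX x 4 L / Ecurve.addY x 4 y L - (((n:ℕ)+1:ℕ) : ℚ) =
            (-(x/y + 4/10 + (L^2-x-4)/(L*(L^2-x-4) + (y - L*x)))) +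
            ((x/y - n) + ((4:ℚ)/10 - 1)) := by
          rw [addX_eval, addY_eval]
          push_cast
          rw [div_neg]
          ring
        rw [hrw]
        calc ν _ ≤ max (ν (-(x/y + 4/10 + (L^2-x-4)/(L*(L^2-x-4) + (y - L*x)))))
              (ν ((x/y - n) + ((4:ℚ)/10 - 1))) := padicNorm.nonarchimedean
          _ < 1 := by
              refine max_lt (by rw [padicNorm.neg]; exact key) ?_
              calc ν ((x/y - n) + ((4:ℚ)/10 - 1)) ≤
                    max (ν (x/y - n)) (ν ((4:ℚ)/10 - 1)) := padicNorm.nonarchimedean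
                _ < 1 := max_lt hc (by rw [pn_C]; norm_num)

lemma goodN_all (k : ℕ) : GoodN k (k • Tpt) := by
  induction k with
  | zero =>
    left
    rw [zero_nsmul]
    refine ⟨rfl, ?_⟩
    norm_num [padicNorm.zero]
  | succ n ih =>
    rw [succ_nsmul]
    exact goodN_step n _ ih

lemma val_lt_iff {x : ℚ} (hx : x ≠ 0) : padicValRat 3 x < 0 ↔ 1 < ν x := by
  rw [padicNorm.eq_zpow_of_nonzero hx]
  rw [show ((3:ℕ):ℚ) = (3:ℚ) by norm_num]
  constructor
  · intro h
    have := zpow_lt_zpow_right₀ (by norm_num : (1:ℚ) < 3) (by omega : 0 < -padicValRat 3 x)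
    simpa using this
  · intro h
    by_contra hcon
    push_neg at hcon
    have : (3:ℚ) ^ (-padicValRat 3 x) ≤ 1 := by
      have := zpow_le_zpow_right₀ (by norm_num : (1:ℚ) ≤ 3) (by omega : -padicValRat 3 x ≤ 0)
      simpa using this
    linarith

lemma final_aux (k : ℕ) {x y : ℚ} (e : y^2 = x^3 + 9*x) (hb : 1 ≤ ν x)
    (hc : ν (x/y - (k:ℚ)) < 1) : padicValRat 3 x < 0 ↔ k % 3 = 0 := by
  have hx0 : x ≠ 0 := by
    intro hz
    rw [hz, padicNorm.zero] at hb
    linarith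
  have hxpos : (0:ℚ) < ν x := lt_of_lt_of_le one_pos hb
  have hy0 : y ≠ 0 := y_ne_zero e hb
  have ht0 : 0 ≤ ν (x/y) := padicNorm.nonneg _
  have htsq : (ν (x/y))^2 * ν x = 1 := by
    have h1 : (ν (x/y))^2 = (ν x)^2 / (ν y)^2 := by
      rw [padicNorm.div, div_pow]
    rw [h1, pn_y_sq e hb]
    field_simp
  have hdvd : ν (x/y) < 1 ↔ ν ((k:ℚ)) < 1 := by
    constructor
    · intro ht
      have hrw : ((k:ℚ)) = (-(x/y - k)) + (x/y) := by ring
      rw [hrw]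
      calc ν ((-(x/y - k)) + (x/y)) ≤ max (ν (-(x/y - k))) (ν (x/y)) :=
            padicNorm.nonarchimedean
        _ < 1 := by rw [padicNorm.neg]; exact max_lt hc ht
    · intro hkk
      have hrw : x/y = (x/y - k) + (k:ℚ) := by ring
      rw [hrw]
      calc ν ((x/y - k) + (k:ℚ)) ≤ max (ν (x/y - k)) (ν ((k:ℚ))) :=
            padicNorm.nonarchimedean
        _ < 1 := max_lt hc hkk
  have hmain : padicValRat 3 x < 0 ↔ ν (x/y) < 1 := by
    rw [val_lt_iff hx0]
    constructor
    · intro hgt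
      by_contra hcon
      push_neg at hcon
      have h2 : 1 ≤ (ν (x/y))^2 := one_le_pow₀ hcon
      nlinarith [mul_le_mul_of_nonneg_right h2 hxpos.le]
    · intro hlt
      have h2 : (ν (x/y))^2 < 1 := by nlinarith
      by_contra hcon
      push_neg at hcon
      nlinarith [mul_le_mul_of_nonneg_left hcon (sq_nonneg (ν (x/y)))]
  rw [hmain, hdvd]
  have hfin : ν ((k:ℚ)) < 1 ↔ 3 ∣ k := by
    have := padicNorm.nat_lt_one_iff (p := 3) k
    exact_mod_cast this
  rw [hfin, Nat.dvd_iff_mod_eq_zero]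

/-- The `3`-adic valuation of the `x`-coordinate of `k • T` is negative exactly when
`3 ∣ k`. -/
theorem v3_xk_neg_iff (k : ℕ) (hk : 0 < k) (x y : ℚ) (h : Ecurve.Nonsingular x y)
    (hkT : k • Tpt = WeierstrassCurve.Affine.Point.some _ _ h) :
    padicValRat 3 x < 0 ↔ k % 3 = 0 := by
  have hg := goodN_all k
  rw [hkT] at hg
  rcases hg with ⟨habs, -⟩ | ⟨x', y', h', heq, hb, hc⟩
  · exact absurd habs (some_ne_zero h)
  · obtain ⟨h1, h2⟩ : x = x' ∧ y = y' := by
      injection heq with h1 h2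
      exact ⟨h1, h2⟩
    rw [h1]
    exact final_aux k (eqn_of_ns h') hb hc
end

section
/- Let x, y be rational numbers with y² = x³ + 9x, x ≠ 0, and v₃(x) ≥ 0. Then x is a square modulo 9; that is, there exists an integer n such that v₃(x − n²) ≥ 2. -/
private lemma zmod3_sq_add_sq : ∀ u v : ZMod 3, u ≠ 0 → v ≠ 0 → u ^ 2 + v ^ 2 ≠ 0 := by decide

private lemma zmod9_key : ∀ A B C D : ZMod 9, C ^ 2 * B ^ 3 = D ^ 2 * A ^ 3 →
    (∀ z, A ≠ 3 * z) → (∀ z, B ≠ 3 * z) → (∀ z, D ≠ 3 * z) →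
    ∃ N : ZMod 9, A = N ^ 2 * B := by decide

private lemma not_mul_three (a : ℤ) (h : ¬ (3:ℤ) ∣ a) : ∀ z : ZMod 9, (a : ZMod 9) ≠ 3 * z := by
  intro z hz
  apply h
  have := congrArg (ZMod.castHom (show (3:ℕ) ∣ 9 by norm_num) (ZMod 3)) hz
  rw [map_intCast, map_mul,
    show (ZMod.castHom (show (3:ℕ) ∣ 9 by norm_num) (ZMod 3)) 3 = 0 by decide, zero_mul] at this
  exact (ZMod.intCast_zmod_eq_zero_iff_dvd a 3).mp this

private lemma exists_n_int (a b c d : ℤ)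
    (key : c ^ 2 * b ^ 3 = d ^ 2 * (a ^ 3 + 9 * a * b ^ 2))
    (h3b : ¬ (3:ℤ) ∣ b) (hgcd : Int.gcd c d = 1) :
    ∃ n : ℤ, (9:ℤ) ∣ a - n ^ 2 * b := by
  have hp3 : Prime (3:ℤ) := Int.prime_three
  by_cases h3a : (3:ℤ) ∣ a
  · by_cases h9a : (9:ℤ) ∣ a
    · exact ⟨0, by simpa using h9a⟩
    · exfalso
      obtain ⟨a', rfl⟩ := h3a
      have h3a' : ¬ (3:ℤ) ∣ a' := by
        intro ⟨t, ht⟩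
        exact h9a ⟨t, by rw [ht]; ring⟩
      have key2 : c ^ 2 * b ^ 3 = 27 * (d ^ 2 * a' * (a' ^ 2 + b ^ 2)) := by
        linear_combination key
      have h3c : (3:ℤ) ∣ c := by
        have hdvd : (3:ℤ) ∣ c ^ 2 * b ^ 3 := key2 ▸ ⟨9 * (d ^ 2 * a' * (a' ^ 2 + b ^ 2)), by ring⟩
        rcases hp3.dvd_mul.mp hdvd with h | h
        · exact hp3.dvd_of_dvd_pow h
        · exact absurd (hp3.dvd_of_dvd_pow h) h3b
      obtain ⟨c1, rfl⟩ := h3c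
      have key3 : c1 ^ 2 * b ^ 3 = 3 * (d ^ 2 * a' * (a' ^ 2 + b ^ 2)) := by
        apply mul_left_cancel₀ (show (9:ℤ) ≠ 0 by norm_num)
        linear_combination key2
      have h3c1 : (3:ℤ) ∣ c1 := by
        have hdvd : (3:ℤ) ∣ c1 ^ 2 * b ^ 3 := key3 ▸ ⟨d ^ 2 * a' * (a' ^ 2 + b ^ 2), rfl⟩
        rcases hp3.dvd_mul.mp hdvd with h | h
        · exact hp3.dvd_of_dvd_pow h
        · exact absurd (hp3.dvd_of_dvd_pow h) h3b
      obtain ⟨c2, rfl⟩ := h3c1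
      have key4 : 3 * (c2 ^ 2 * b ^ 3) = d ^ 2 * a' * (a' ^ 2 + b ^ 2) := by
        apply mul_left_cancel₀ (show (3:ℤ) ≠ 0 by norm_num)
        linear_combination key3
      have hdvd : (3:ℤ) ∣ d ^ 2 * a' * (a' ^ 2 + b ^ 2) := ⟨c2 ^ 2 * b ^ 3, key4.symm⟩
      have h3d : ¬ (3:ℤ) ∣ d := by
        intro h3d
        have h3c : (3:ℤ) ∣ 3 * (3 * c2) := ⟨3 * c2, rfl⟩
        have := Int.dvd_gcd h3c h3d
        rw [hgcd] at this
        norm_num at this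
      have h3s : ¬ (3:ℤ) ∣ (a' ^ 2 + b ^ 2) := by
        intro h
        apply zmod3_sq_add_sq (a' : ZMod 3) (b : ZMod 3)
        · intro h0
          exact h3a' ((ZMod.intCast_zmod_eq_zero_iff_dvd a' 3).mp h0)
        · intro h0
          exact h3b ((ZMod.intCast_zmod_eq_zero_iff_dvd b 3).mp h0)
        · have := (ZMod.intCast_zmod_eq_zero_iff_dvd (a' ^ 2 + b ^ 2) 3).mpr h
          push_cast at this
          exact this
      rcases hp3.dvd_mul.mp hdvd with h | h
      · rcases hp3.dvd_mul.mp h with h' | h'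
        · exact h3d (hp3.dvd_of_dvd_pow h')
        · exact h3a' h'
      · exact h3s h
  · have h3d : ¬ (3:ℤ) ∣ d := by
      intro h3d
      have h3c : (3:ℤ) ∣ c := by
        have hdvd : (3:ℤ) ∣ c ^ 2 * b ^ 3 := by
          rw [key]
          exact dvd_mul_of_dvd_left (dvd_pow h3d two_ne_zero) _
        rcases hp3.dvd_mul.mp hdvd with h | h
        · exact hp3.dvd_of_dvd_pow h
        · exact absurd (hp3.dvd_of_dvd_pow h) h3b
      have := Int.dvd_gcd h3c h3d
      rw [hgcd] at this
      norm_num at this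
    have E : (c : ZMod 9) ^ 2 * (b : ZMod 9) ^ 3 = (d : ZMod 9) ^ 2 * (a : ZMod 9) ^ 3 := by
      have h := congrArg (fun t : ℤ => (t : ZMod 9)) key
      push_cast at h
      have h9 : (9 : ZMod 9) = 0 := by decide
      linear_combination h + ((d:ZMod 9) ^ 2 * (a:ZMod 9) * (b:ZMod 9) ^ 2) * h9
    obtain ⟨N, hN⟩ := zmod9_key (a : ZMod 9) (b : ZMod 9) (c : ZMod 9) (d : ZMod 9) E
      (not_mul_three a h3a) (not_mul_three b h3b) (not_mul_three d h3d)
    refine ⟨(N.val : ℤ), ?_⟩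
    have hNv : (((N.val : ℤ)) : ZMod 9) = N := by
      push_cast [ZMod.natCast_val, ZMod.intCast_cast]
      simp [ZMod.cast_id]
    have : ((a - (N.val : ℤ) ^ 2 * b : ℤ) : ZMod 9) = 0 := by
      push_cast
      rw [show (((N.val : ℕ) : ZMod 9)) = N from by exact_mod_cast hNv, hN]
      ring
    exact (ZMod.intCast_zmod_eq_zero_iff_dvd _ 9).mp this

private lemma final_step (x : ℚ) (h3b : ¬ (3:ℤ) ∣ (x.den : ℤ)) (n : ℤ)
    (h9 : (9:ℤ) ∣ x.num - n ^ 2 * (x.den : ℤ)) :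
    x - (n : ℚ) ^ 2 = 0 ∨ 2 ≤ padicValRat 3 (x - (n : ℚ) ^ 2) := by
  have : Fact (Nat.Prime 3) := ⟨by norm_num⟩
  by_cases h0 : x - (n : ℚ) ^ 2 = 0
  · exact Or.inl h0
  right
  have hb : ((x.den:ℚ)) ≠ 0 := by exact_mod_cast x.den_nz
  have hrep : x - (n:ℚ)^2 = ((x.num - n^2 * (x.den:ℤ) : ℤ) : ℚ) / ((x.den : ℚ)) := by
    conv_lhs => rw [← Rat.num_div_den x]
    push_cast
    field_simp
  have hnum : (x.num - n^2 * (x.den:ℤ) : ℤ) ≠ 0 := by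
    intro h
    apply h0
    rw [hrep, h]
    simp
  rw [hrep, padicValRat.div (by exact_mod_cast hnum) hb]
  rw [show ((x.den:ℚ)) = (((x.den:ℤ)):ℚ) by push_cast; rfl]
  rw [padicValRat.of_int, padicValRat.of_int]
  rw [padicValInt.eq_zero_of_not_dvd h3b]
  have h2 : 2 ≤ padicValInt 3 (x.num - n^2 * (x.den:ℤ)) := by
    rcases (padicValInt_dvd_iff (p := 3) 2 _).mp (by norm_num; exact h9) with h | h
    · exact absurd h hnum
    · exact h
  push_cast
  omega

/-- If `(x, y)` is a rational point on `y² = x³ + 9x` with `x ≠ 0` and `v₃(x) ≥ 0`, then `x`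
is a square modulo `9`: there is an integer `n` with `v₃(x - n²) ≥ 2` (where `v₃(0) = +∞`). -/
theorem x_square_mod_nine (x y : ℚ) (hxy : y ^ 2 = x ^ 3 + 9 * x) (hx : x ≠ 0)
    (hv : 0 ≤ padicValRat 3 x) :
    ∃ n : ℤ, x - (n : ℚ) ^ 2 = 0 ∨ 2 ≤ padicValRat 3 (x - (n : ℚ) ^ 2) := by
  have : Fact (Nat.Prime 3) := ⟨by norm_num⟩
  have hbq : ((x.den:ℚ)) ≠ 0 := by exact_mod_cast x.den_nz
  -- the key integral equation
  have key : y.num ^ 2 * (x.den:ℤ) ^ 3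
      = (y.den:ℤ) ^ 2 * (x.num ^ 3 + 9 * x.num * (x.den:ℤ) ^ 2) := by
    have keyq : (y.num:ℚ)^2 * (x.den:ℚ)^3
        = (y.den:ℚ)^2 * ((x.num:ℚ)^3 + 9 * x.num * (x.den:ℚ)^2) := by
      rw [(Rat.num_div_den x).symm, (Rat.num_div_den y).symm] at hxy
      field_simp at hxy
      apply mul_right_cancel₀ hbq
      linear_combination (x.den : ℚ) * hxy
    exact_mod_cast keyq
  -- 3 does not divide the denominator of x
  have h3b : ¬ (3:ℤ) ∣ (x.den:ℤ) := by
    intro h3b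
    have hden : (3:ℕ) ∣ x.den := by exact_mod_cast h3b
    have hnum : ¬ (3:ℤ) ∣ x.num := by
      intro h
      have h1 : (3:ℕ) ∣ x.num.natAbs := by
        have := Int.natAbs_dvd_natAbs.mpr h
        simpa using this
      have := Nat.dvd_gcd h1 hden
      rw [x.reduced] at this
      norm_num at this
    have e1 : padicValInt 3 x.num = 0 := padicValInt.eq_zero_of_not_dvd hnum
    have e2 : 1 ≤ padicValNat 3 x.den := by
      rcases (padicValNat_dvd_iff (p := 3) 1 x.den).mp (by simpa using hden) with h | h
      · exact absurd h x.den_nz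
      · exact h
    rw [padicValRat_def, e1] at hv
    omega
  have hgcd : Int.gcd y.num (y.den:ℤ) = 1 := by
    have := y.reduced
    simpa [Int.gcd, Nat.Coprime] using this
  obtain ⟨n, hn⟩ := exists_n_int x.num (x.den:ℤ) y.num (y.den:ℤ) key h3b hgcd
  exact ⟨n, final_step x h3b n hn⟩
end

section
/- Let t, s be nonzero rational numbers with t⁴ − 1 = −6s². If v₂(s) > 0, then v₂(t) = 0, v₂((t² − 7)(7t² − 1)) = 2, and v₂((t² + 5)(5t² + 1)) = 2. -/
private lemma v2_odd_int {z : ℤ} (h : ¬ (2:ℤ) ∣ z) : padicValRat 2 (z:ℚ) = 0 := by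
  rw [padicValRat.of_int, padicValInt.eq_zero_of_not_dvd h]; rfl

private lemma v2_two_mod_four {m : ℤ} (hm : m % 4 = 2) : padicValRat 2 (m:ℚ) = 1 := by
  obtain ⟨k, hk⟩ : ∃ k, m = 2 * (2 * k + 1) := ⟨(m - 2) / 4, by omega⟩
  have hodd : ¬ (2:ℤ) ∣ (2 * k + 1) := by omega
  have hcast : (m : ℚ) = (2:ℚ) * ((2 * k + 1 : ℤ) : ℚ) := by rw [hk]; push_cast; ring
  have hne : ((2 * k + 1 : ℤ) : ℚ) ≠ 0 := by
    exact_mod_cast (by omega : (2 * k + 1 : ℤ) ≠ 0)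
  rw [hcast, padicValRat.mul (by norm_num) hne, v2_odd_int hodd]
  simpa using padicValRat.self (p := 2) (by norm_num)

private lemma v2_quot {m n : ℤ} (hm : m % 4 = 2) (hn : ¬ (2:ℤ) ∣ n) :
    padicValRat 2 ((m:ℚ) / (n:ℚ)) = 1 ∧ (m:ℚ) / (n:ℚ) ≠ 0 := by
  have hm0 : (m:ℚ) ≠ 0 := by exact_mod_cast (by omega : m ≠ 0)
  have hn0 : (n:ℚ) ≠ 0 := by exact_mod_cast (by omega : n ≠ 0)
  refine ⟨?_, div_ne_zero hm0 hn0⟩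
  rw [padicValRat.div hm0 hn0, v2_two_mod_four hm, v2_odd_int hn]
  ring

/-- On the curve `t⁴ - 1 = -6s²`, if `v₂(s) > 0` then `v₂(t) = 0` and
`v₂((t² - 7)(7t² - 1)) = v₂((t² + 5)(5t² + 1)) = 2`. -/
theorem v2_values (t s : ℚ) (ht : t ≠ 0) (hs : s ≠ 0)
    (hts : t ^ 4 - 1 = -(6 * s ^ 2)) (hv : 0 < padicValRat 2 s) :
    padicValRat 2 t = 0 ∧
      padicValRat 2 ((t ^ 2 - 7) * (7 * t ^ 2 - 1)) = 2 ∧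
      padicValRat 2 ((t ^ 2 + 5) * (5 * t ^ 2 + 1)) = 2 := by
  set a : ℤ := t.num with ha
  set b : ℤ := (t.den : ℤ) with hb
  have hbpos : 0 < b := by rw [hb]; exact_mod_cast t.pos
  have hbQ : (b:ℚ) ≠ 0 := by
    have : (0:ℚ) < (b:ℚ) := by exact_mod_cast hbpos
    linarith
  have hteq : t = (a:ℚ) / (b:ℚ) := by
    rw [ha, hb]; push_cast; exact (Rat.num_div_den t).symm
  -- s.num is even, s.den is odd
  have hc2 : (2:ℤ) ∣ s.num := by
    by_contra h
    have h0 : padicValInt 2 s.num = 0 := padicValInt.eq_zero_of_not_dvd h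
    rw [padicValRat_def, h0] at hv
    omega
  have hd2 : ¬ (2 ∣ s.den) := by
    intro h
    have h1 : 2 ∣ s.num.natAbs := by
      have := Int.natAbs_dvd_natAbs.mpr hc2
      simpa using this
    have := Nat.dvd_gcd h1 h
    rw [Nat.Coprime.gcd_eq_one s.reduced] at this
    omega
  -- the integer equation
  have hsden : ((s.den : ℚ)) ≠ 0 := by
    exact_mod_cast s.den_ne_zero
  have hseq : (s.num : ℚ) = s * (s.den : ℚ) :=
    (div_eq_iff hsden).mp (Rat.num_div_den s)
  have haq : (a:ℚ) = t * (b:ℚ) := by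
    rw [hteq]; field_simp
  have key : (a ^ 4 - b ^ 4) * (s.den : ℤ) ^ 2 = -6 * s.num ^ 2 * b ^ 4 := by
    have : ((a:ℚ) ^ 4 - (b:ℚ) ^ 4) * (s.den : ℚ) ^ 2 = -6 * (s.num:ℚ) ^ 2 * (b:ℚ) ^ 4 := by
      rw [haq, hseq]
      linear_combination ((b:ℚ) ^ 4 * (s.den:ℚ) ^ 2) * hts
    exact_mod_cast this
  -- a and b are odd
  have habodd : ¬ (2:ℤ) ∣ a ∧ ¬ (2:ℤ) ∣ b := by
    have hrhs : (2:ℤ) ∣ (a ^ 4 - b ^ 4) * (s.den : ℤ) ^ 2 := by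
      rw [key]
      exact ⟨-3 * s.num ^ 2 * b ^ 4, by ring⟩
    have hdenodd : ¬ (2:ℤ) ∣ (s.den : ℤ) ^ 2 := by
      intro h
      exact hd2 (by exact_mod_cast Prime.dvd_of_dvd_pow Int.prime_two h)
    have hdiff : (2:ℤ) ∣ a ^ 4 - b ^ 4 :=
      ((Int.prime_two.dvd_mul.mp hrhs).resolve_right hdenodd)
    have hiff : ((2:ℤ) ∣ a) ↔ ((2:ℤ) ∣ b) := by
      constructor <;> intro h
      · have h4 : (2:ℤ) ∣ b ^ 4 := by
          have : (2:ℤ) ∣ a ^ 4 := h.trans (dvd_pow_self a (by norm_num))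
          omega
        exact Prime.dvd_of_dvd_pow Int.prime_two h4
      · have h4 : (2:ℤ) ∣ a ^ 4 := by
          have : (2:ℤ) ∣ b ^ 4 := h.trans (dvd_pow_self b (by norm_num))
          omega
        exact Prime.dvd_of_dvd_pow Int.prime_two h4
    by_contra hcon
    have hda : (2:ℤ) ∣ a := by tauto
    have hdb : (2:ℤ) ∣ b := hiff.mp hda
    have h1 : 2 ∣ a.natAbs := by
      have := Int.natAbs_dvd_natAbs.mpr hda
      simpa using this
    have h2 : 2 ∣ t.den := by
      have hdb' : (2:ℤ) ∣ (t.den : ℤ) := hb ▸ hdb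
      exact_mod_cast hdb'
    have := Nat.dvd_gcd h1 h2
    rw [Nat.Coprime.gcd_eq_one t.reduced] at this
    omega
  obtain ⟨haodd, hbodd⟩ := habodd
  -- odd squares are 1 mod 4
  have hsq : ∀ z : ℤ, ¬ (2:ℤ) ∣ z → z ^ 2 % 4 = 1 := by
    intro z hz
    obtain ⟨k, hk⟩ : ∃ k, z = 2 * k + 1 := ⟨(z - 1) / 2, by omega⟩
    have : z ^ 2 = 4 * (k * k + k) + 1 := by rw [hk]; ring
    omega
  have ha4 := hsq a haodd
  have hb4 := hsq b hbodd
  have hb2odd : ¬ (2:ℤ) ∣ b ^ 2 := fun h => hbodd (Prime.dvd_of_dvd_pow Int.prime_two h)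
  -- part 1
  refine ⟨?_, ?_, ?_⟩
  · rw [padicValRat_def, padicValInt.eq_zero_of_not_dvd haodd,
      padicValNat.eq_zero_of_not_dvd (by
        intro h
        exact hbodd (hb ▸ (by exact_mod_cast h : (2:ℤ) ∣ (t.den:ℤ))))]
    simp
  · have e1 : t ^ 2 - 7 = ((a ^ 2 - 7 * b ^ 2 : ℤ) : ℚ) / ((b ^ 2 : ℤ) : ℚ) := by
      rw [hteq]; push_cast; field_simp; try ring
    have e2 : 7 * t ^ 2 - 1 = ((7 * a ^ 2 - b ^ 2 : ℤ) : ℚ) / ((b ^ 2 : ℤ) : ℚ) := by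
      rw [hteq]; push_cast; field_simp; try ring
    obtain ⟨v1, n1⟩ := v2_quot (m := a ^ 2 - 7 * b ^ 2) (by omega) hb2odd
    obtain ⟨v2, n2⟩ := v2_quot (m := 7 * a ^ 2 - b ^ 2) (by omega) hb2odd
    rw [e1, e2, padicValRat.mul n1 n2, v1, v2]; norm_num
  · have e1 : t ^ 2 + 5 = ((a ^ 2 + 5 * b ^ 2 : ℤ) : ℚ) / ((b ^ 2 : ℤ) : ℚ) := by
      rw [hteq]; push_cast; field_simp; try ring
    have e2 : 5 * t ^ 2 + 1 = ((5 * a ^ 2 + b ^ 2 : ℤ) : ℚ) / ((b ^ 2 : ℤ) : ℚ) := by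
      rw [hteq]; push_cast; field_simp; try ring
    obtain ⟨v1, n1⟩ := v2_quot (m := a ^ 2 + 5 * b ^ 2) (by omega) hb2odd
    obtain ⟨v2, n2⟩ := v2_quot (m := 5 * a ^ 2 + b ^ 2) (by omega) hb2odd
    rw [e1, e2, padicValRat.mul n1 n2, v1, v2]; norm_num
end
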